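/- Let C be a commutative Picard category (a symmetric monoidal groupoid in which tensoring with any fixed object is an equivalence). Then C has a unit object 0 with 0 + X ≅ X for every X, and every object X admits an inverse −X with X + (−X) ≅ 0. -/

import Mathlib

/-!
Pick any object `E`. Since `X ↦ E + X` is essentially surjective, there is `Z` with
`E + Z ≅ E`; then `E + (Z + X) ≅ (E + Z) + X ≅ E + X`, and since `X ↦ E + X` is fully
faithful this gives `Z + X ≅ X`. Inverses come from essential surjectivity of `Y ↦ X + Y`.
-/

open CategoryTheory

universe v u

/-- The data of a commutative Picard category structure on a groupoid `C`. -/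
structure CommPicardStruct (C : Type u) [Groupoid.{v} C] where
  /-- The addition bifunctor. -/
  F : C × C ⥤ C
  /-- The associativity isomorphism `(x + y) + z ≅ x + (y + z)`, natural in all variables. -/
  assoc : F.prod (𝟭 C) ⋙ F ≅ prod.associator C C C ⋙ (𝟭 C).prod F ⋙ F
  /-- The commutativity isomorphism `x + y ≅ y + x`, natural in both variables. -/
  comm : F ≅ CategoryTheory.Prod.swap C C ⋙ F
  /-- The pentagon coherence constraint. -/
  pentagon : ∀ w x y z : C,
    assoc.hom.app ((F.obj (w, x), y), z) ≫ assoc.hom.app ((w, x), F.obj (y, z)) =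
      F.map (assoc.hom.app ((w, x), y), 𝟙 z) ≫ assoc.hom.app ((w, F.obj (x, y)), z) ≫
        F.map (CategoryTheory.Prod.mkHom (𝟙 w) (assoc.hom.app ((x, y), z)))
  /-- The hexagon coherence constraint. -/
  hexagon : ∀ x y z : C,
    assoc.hom.app ((x, y), z) ≫ comm.hom.app (x, F.obj (y, z)) ≫
        assoc.hom.app ((y, z), x) =
      F.map (comm.hom.app (x, y), 𝟙 z) ≫ assoc.hom.app ((y, x), z) ≫
        F.map (CategoryTheory.Prod.mkHom (𝟙 y) (comm.hom.app (x, z)))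
  /-- The commutativity constraint is symmetric. -/
  symm : ∀ x y : C, comm.hom.app (x, y) ≫ comm.hom.app (y, x) = 𝟙 (F.obj (x, y))
  /-- For every `P`, the functor `X ↦ P + X` is an equivalence. -/
  equivL : ∀ P : C, ((Functor.curry.obj F).obj P).IsEquivalence
  /-- For every `P`, the functor `X ↦ X + P` is an equivalence. -/
  equivR : ∀ P : C, ((Functor.curry.obj (CategoryTheory.Prod.swap C C ⋙ F)).obj P).IsEquivalence

namespace CommPicardStruct

variable {C : Type u} [Groupoid.{v} C] (D : CommPicardStruct C)

theorem exists_add_iso (X Z : C) : ∃ Y : C, Nonempty (D.F.obj (X, Y) ≅ Z) :=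
  haveI := D.equivL X
  ⟨_, ⟨((Functor.curry.obj D.F).obj X).objObjPreimageIso Z⟩⟩

noncomputable def addLeftCancelIso {E A B : C} (e : D.F.obj (E, A) ≅ D.F.obj (E, B)) :
    A ≅ B :=
  haveI := D.equivL E
  ((Functor.curry.obj D.F).obj E).preimageIso e

theorem nonempty_add_iso_of_add_iso_self {E Z : C} (e : D.F.obj (E, Z) ≅ E) (X : C) :
    Nonempty (D.F.obj (Z, X) ≅ X) :=
  ⟨D.addLeftCancelIso <| (D.assoc.app ((E, Z), X)).symm ≪≫ D.F.mapIso (e.prod (Iso.refl X))⟩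

end CommPicardStruct

theorem commPicard_has_unit_and_inverses (C : Type u) [Groupoid.{v} C] [Nonempty C]
    (D : CommPicardStruct C) :
    ∃ Z : C, (∀ X : C, Nonempty (D.F.obj (Z, X) ≅ X)) ∧
      ∀ X : C, ∃ Y : C, Nonempty (D.F.obj (X, Y) ≅ Z) := by
  obtain ⟨E⟩ := ‹Nonempty C›
  obtain ⟨Z, ⟨e⟩⟩ := D.exists_add_iso E E
  exact ⟨Z, D.nonempty_add_iso_of_add_iso_self e, fun X => D.exists_add_iso X Z⟩
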